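/- For x, y ∈ [l, l+1), one has x < y if and only if d(x) ≺_alt d(y), where d denotes the (-β,l)-expansion and ≺_alt the alternate order on integer sequences: u ≺_alt v iff at the first index m where u_m ≠ v_m one has (-1)^m (v_m - u_m) > 0. -/

import Mathlib

noncomputable def negBetaT (β l x : ℝ) : ℝ := -β * x - ⌊-β * x - l⌋

noncomputable def negBetaDigit (β l x : ℝ) (i : ℕ) : ℤ :=
  ⌊-β * ((negBetaT β l)^[i] x) - l⌋

/-- The alternate (strict) order on integer sequences: at the first differing
index `m` (0-indexed, corresponding to index `m+1` in 1-indexed notation),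
`(-1)^(m+1) * (v m - u m) > 0`. -/
def AltLt (u v : ℕ → ℤ) : Prop :=
  ∃ m : ℕ, (∀ k < m, u k = v k) ∧ (-1 : ℤ) ^ (m + 1) * (v m - u m) > 0

/-!
If `x` and `y` share their first `m` digits, then `T^m x - T^m y = (-β)^m (x - y)`. Since all
iterates stay in an interval of length one and `β > 1`, distinct points must eventually get
distinct digits. At the first index `m` where they differ, the digit map `a ↦ ⌊-β a - l⌋` is
antitone, so the sign of the digit difference is opposite to that of `T^m y - T^m x`, that is
to `(-1)^m (y - x)`.
-/

theorem AltLt.asymm {u v : ℕ → ℤ} (huv : AltLt u v) (hvu : AltLt v u) : False := by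
  obtain ⟨m, hm, hm'⟩ := huv
  obtain ⟨n, hn, hn'⟩ := hvu
  rcases lt_trichotomy m n with h | rfl | h
  · rw [hn m h] at hm'; simp at hm'
  · linarith [show (-1 : ℤ) ^ (m + 1) * (u m - v m) = -((-1) ^ (m + 1) * (v m - u m)) by ring]
  · rw [hm n h] at hn'; simp at hn'

theorem AltLt.irrefl (u : ℕ → ℤ) : ¬ AltLt u u := fun h => h.asymm h

theorem exists_forall_lt_eq_and_ne {α : Type*} {u v : ℕ → α} (h : u ≠ v) :
    ∃ m, (∀ k < m, u k = v k) ∧ u m ≠ v m := by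
  classical
  have hex : ∃ m, u m ≠ v m := Function.ne_iff.mp h
  exact ⟨Nat.find hex, fun k hk => not_not.mp (Nat.find_min hex hk), Nat.find_spec hex⟩

theorem Antitone.int_sub_mul_sub_pos {f : ℝ → ℤ} (hf : Antitone f) {a b : ℝ} (h : f a ≠ f b) :
    0 < ((f b - f a : ℤ) : ℝ) * (a - b) := by
  rcases lt_trichotomy a b with hab | rfl | hab
  · have : f b < f a := (hf hab.le).lt_of_ne h.symm
    have : ((f b - f a : ℤ) : ℝ) < 0 := by exact_mod_cast sub_neg.mpr this
    nlinarith
  · exact absurd rfl h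
  · have : f a < f b := (hf hab.le).lt_of_ne h
    have : (0 : ℝ) < ((f b - f a : ℤ) : ℝ) := by exact_mod_cast sub_pos.mpr this
    nlinarith

section NegBeta

variable {β l : ℝ}

theorem negBetaT_mem_Ico (x : ℝ) : negBetaT β l x ∈ Set.Ico l (l + 1) := by
  have h : negBetaT β l x = Int.fract (-β * x - l) + l := by
    rw [negBetaT, Int.fract]; ring
  rw [h]
  exact ⟨by linarith [Int.fract_nonneg (-β * x - l)], by linarith [Int.fract_lt_one (-β * x - l)]⟩

theorem iterate_negBetaT_mem_Ico {x : ℝ} (hx : x ∈ Set.Ico l (l + 1)) (n : ℕ) :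
    (negBetaT β l)^[n] x ∈ Set.Ico l (l + 1) :=
  Set.MapsTo.iterate (fun y _ => negBetaT_mem_Ico y) n hx

theorem iterate_succ_negBetaT (x : ℝ) (m : ℕ) :
    (negBetaT β l)^[m + 1] x = -β * (negBetaT β l)^[m] x - negBetaDigit β l x m := by
  rw [Function.iterate_succ_apply']
  rfl

theorem iterate_negBetaT_sub {x y : ℝ} {m : ℕ}
    (h : ∀ k < m, negBetaDigit β l x k = negBetaDigit β l y k) :
    (negBetaT β l)^[m] x - (negBetaT β l)^[m] y = (-β) ^ m * (x - y) := by
  induction m with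
  | zero => simp
  | succ n ih =>
    rw [iterate_succ_negBetaT, iterate_succ_negBetaT, h n n.lt_succ_self]
    linear_combination (-β) * ih fun k hk => h k (hk.trans n.lt_succ_self)

theorem negBetaDigit_injOn (hβ : 1 < β) : Set.InjOn (negBetaDigit β l) (Set.Ico l (l + 1)) := by
  intro x hx y hy hxy
  by_contra hne
  have hpos : 0 < |x - y| := abs_pos.mpr (sub_ne_zero.mpr hne)
  obtain ⟨n, hn⟩ := pow_unbounded_of_one_lt |x - y|⁻¹ hβ
  have hclose : |(negBetaT β l)^[n] x - (negBetaT β l)^[n] y| < 1 := by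
    obtain ⟨hx₁, hx₂⟩ := iterate_negBetaT_mem_Ico (β := β) hx n
    obtain ⟨hy₁, hy₂⟩ := iterate_negBetaT_mem_Ico (β := β) hy n
    rw [abs_lt]
    constructor <;> linarith
  rw [iterate_negBetaT_sub fun k _ => congrFun hxy k, abs_mul, abs_pow, abs_neg,
    abs_of_pos (by linarith)] at hclose
  exact (lt_asymm hclose) ((inv_lt_iff_one_lt_mul₀ hpos).mp hn)

theorem antitone_floor_neg_mul_sub (l : ℝ) (hβ : 0 ≤ β) :
    Antitone fun a : ℝ => ⌊-β * a - l⌋ :=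
  fun _ _ hab => Int.floor_le_floor (by nlinarith)

theorem altLt_negBetaDigit_of_lt (hβ : 1 < β) {x y : ℝ} (hx : x ∈ Set.Ico l (l + 1))
    (hy : y ∈ Set.Ico l (l + 1)) (hxy : x < y) :
    AltLt (negBetaDigit β l x) (negBetaDigit β l y) := by
  obtain ⟨m, hagree, hm⟩ :=
    exists_forall_lt_eq_and_ne ((negBetaDigit_injOn hβ).ne hx hy hxy.ne)
  refine ⟨m, hagree, ?_⟩
  have hsign : 0 < ((negBetaDigit β l y m - negBetaDigit β l x m : ℤ) : ℝ) *
      ((negBetaT β l)^[m] x - (negBetaT β l)^[m] y) :=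
    (antitone_floor_neg_mul_sub l (by linarith : (0 : ℝ) ≤ β)).int_sub_mul_sub_pos hm
  rw [iterate_negBetaT_sub hagree, neg_pow] at hsign
  push_cast at hsign
  have hscale : 0 < β ^ m * (y - x) := mul_pos (pow_pos (by linarith) m) (sub_pos.mpr hxy)
  have key : (0 : ℝ) < (-1) ^ (m + 1) * (negBetaDigit β l y m - negBetaDigit β l x m) :=
    pos_of_mul_pos_left (b := β ^ m * (y - x)) (by linear_combination hsign) hscale.le
  exact_mod_cast key

end NegBeta

theorem stmt_11_general (β l : ℝ) (hβ : 1 < β)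
    (x y : ℝ) (hx : x ∈ Set.Ico l (l + 1)) (hy : y ∈ Set.Ico l (l + 1)) :
    x < y ↔ AltLt (negBetaDigit β l x) (negBetaDigit β l y) := by
  refine ⟨altLt_negBetaDigit_of_lt hβ hx hy, fun h => ?_⟩
  by_contra hyx
  rcases (not_lt.mp hyx).lt_or_eq with hlt | rfl
  · exact h.asymm (altLt_negBetaDigit_of_lt hβ hy hx hlt)
  · exact AltLt.irrefl _ h

theorem stmt_11 (β l : ℝ) (hβ : 1 < β) (hl₁ : -1 < l) (hl₂ : l ≤ 0)
    (x y : ℝ) (hx : x ∈ Set.Ico l (l + 1)) (hy : y ∈ Set.Ico l (l + 1)) :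
    x < y ↔ AltLt (negBetaDigit β l x) (negBetaDigit β l y) :=
  stmt_11_general β l hβ x y hx hy
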